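/- Let A⁺, A⁻ : ℝ → ℝ and u⁺, u⁻, û, c ∈ ℝ. Assume the Rankine–Hugoniot condition A⁺(u⁺) = A⁻(u⁻) and that the Kruzkov entropy inequality holds at c. Then: (i) if u⁺ ≤ u⁻ < c < û, then A⁺(c) ≤ A⁻(c); (ii) if u⁺ < c < u⁻ ≤ û, then A⁺(c) ≤ A⁺(u⁺). -/

import Mathlib

/-! In both configurations every sign and indicator in the entropy inequality is determined, so
each side reduces to `2 A(c) - A(u)` (trace `u` below `c < û`) or to `A(u)` (trace in `(c, û]`);
the Rankine–Hugoniot condition then cancels the flux values at the traces. -/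

open MeasureTheory Filter Set

/-- The Kruzkov entropy inequality at `c` for data `(um, up, uh)`:
`A⁺(u⁺)·sign(u⁺−c) − 2·sign(u⁺−û)·A⁺(c)·𝟙_{(û,u⁺)}(c) ≤
 A⁻(u⁻)·sign(u⁻−c) − 2·sign(u⁻−û)·A⁻(c)·𝟙_{(û,u⁻)}(c)`. -/
def KruzkovIneq (Ap Am : ℝ → ℝ) (um up uh c : ℝ) : Prop :=
  Ap up * Real.sign (up - c) -
      2 * Real.sign (up - uh) * Ap c * Set.indicator (Set.uIoo uh up) (1 : ℝ → ℝ) c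
    ≤ Am um * Real.sign (um - c) -
      2 * Real.sign (um - uh) * Am c * Set.indicator (Set.uIoo uh um) (1 : ℝ → ℝ) c

noncomputable def kruzkovFlux (A : ℝ → ℝ) (u uh c : ℝ) : ℝ :=
  A u * Real.sign (u - c) - 2 * Real.sign (u - uh) * A c * (uIoo uh u).indicator 1 c

theorem kruzkovIneq_iff {Ap Am : ℝ → ℝ} {um up uh c : ℝ} :
    KruzkovIneq Ap Am um up uh c ↔ kruzkovFlux Ap up uh c ≤ kruzkovFlux Am um uh c :=
  Iff.rfl

theorem kruzkovFlux_of_lt_of_lt {A : ℝ → ℝ} {u uh c : ℝ} (hu : u < c) (hc : c < uh) :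
    kruzkovFlux A u uh c = 2 * A c - A u := by
  rw [kruzkovFlux, Real.sign_of_neg (sub_neg.2 hu), Real.sign_of_neg (sub_neg.2 (hu.trans hc)),
    uIoo_of_gt (hu.trans hc), indicator_of_mem (show c ∈ Ioo u uh from ⟨hu, hc⟩), Pi.one_apply]
  ring

theorem kruzkovFlux_of_lt_of_le {A : ℝ → ℝ} {u uh c : ℝ} (hc : c < u) (hu : u ≤ uh) :
    kruzkovFlux A u uh c = A u := by
  rw [kruzkovFlux, Real.sign_of_pos (sub_pos.2 hc), uIoo_of_ge hu,
    indicator_of_notMem fun h => lt_asymm hc h.1]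
  ring

theorem stmt_9 (Ap Am : ℝ → ℝ) (up um uh c : ℝ)
    (hRH : Ap up = Am um)
    (hkruz : KruzkovIneq Ap Am um up uh c) :
    (up ≤ um → um < c → c < uh → Ap c ≤ Am c) ∧
    (up < c → c < um → um ≤ uh → Ap c ≤ Ap up) := by
  rw [kruzkovIneq_iff] at hkruz
  refine ⟨fun hle hum huh => ?_, fun hup hum huh => ?_⟩
  · rw [kruzkovFlux_of_lt_of_lt (hle.trans_lt hum) huh, kruzkovFlux_of_lt_of_lt hum huh] at hkruz
    linarith
  · rw [kruzkovFlux_of_lt_of_lt hup (hum.trans_le huh), kruzkovFlux_of_lt_of_le hum huh] at hkruz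
    linarith
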